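/- Rao-Blackwellization of the stochastic sum-and-sample estimator yields the unordered set estimator: E_{B^k ~ p(B^k|S^k)}[ ∑_{j=1}^{k-1} p(b_j) f(b_j) + (1 - ∑_{j=1}^{k-1} p(b_j)) f(b_k) ] = ∑_{s∈S^k} p(s) R(S^k,s) f(s). -/

import Mathlib

open Finset MeasureTheory

variable {α : Type*}

/-- Probability of drawing the ordered sample `B` sequentially without replacement
from (unnormalized) weights `p`, when `t` is the total remaining probability mass. -/
noncomputable def ordProb (p : α → ℝ) : ℝ → List α → ℝ
  | _, [] => 1
  | t, b :: L => (p b / t) * ordProb p (t - p b) L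

/-- Probability of drawing the unordered sample `S` without replacement:
sum of `ordProb` over all orderings of `S`. -/
noncomputable def setProb (p : α → ℝ) (t : ℝ) (S : Finset α) : ℝ :=
  (S.toList.permutations.map (ordProb p t)).sum

/-! Write an ordering of `S` as `L ++ [a]`. As `L` is then an ordering of `S.erase a`, the
sum-and-sample estimator equals `∑ s ∈ S, p s * f s + (1 - ∑ s ∈ S, p s) * f a`, so its
expectation is a combination of the probabilities `lastProb` that the sample ends with `a`.
The unordered set estimator instead weighs `f a` by `p a * setProb p (1 - p a) (S.erase a)`,
the probability that the sample starts with `a`; the two are related by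
`p a * setProb p (1 - p a) (S.erase a) = p a * setProb p 1 S + (1 - ∑ s ∈ S, p s) * lastProb a`,
which follows by induction on `S`, expanding each side by the first element drawn. -/

theorem ordProb_append (p : α → ℝ) (t : ℝ) (L M : List α) :
    ordProb p t (L ++ M) = ordProb p t L * ordProb p (t - (L.map p).sum) M := by
  induction L generalizing t with
  | nil => simp [ordProb]
  | cons b L ih => simp only [List.cons_append, ordProb, ih, List.map_cons, List.sum_cons,
      sub_add_eq_sub_sub, mul_assoc]

theorem setProb_empty (p : α → ℝ) (t : ℝ) : setProb p t ∅ = 1 := by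
  simp [setProb, ordProb]

theorem setProb_singleton (p : α → ℝ) (t : ℝ) (a : α) : setProb p t {a} = p a / t := by
  rw [setProb, toList_singleton]
  simp [List.permutations, ordProb]

section Orderings

variable [DecidableEq α]

noncomputable def orderings (S : Finset α) : Finset (List α) := S.toList.permutations.toFinset

variable {S : Finset α} {B : List α}

theorem mem_orderings : B ∈ orderings S ↔ B.Perm S.toList := by
  simp [orderings, List.mem_permutations]

theorem sum_orderings {M : Type*} [AddCommMonoid M] (h : List α → M) (S : Finset α) :
    ∑ B ∈ orderings S, h B = (S.toList.permutations.map h).sum :=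
  List.sum_toFinset _ (List.nodup_permutations _ S.nodup_toList)

theorem sum_map_of_mem_orderings {M : Type*} [AddCommMonoid M] (g : α → M)
    (hB : B ∈ orderings S) : (B.map g).sum = ∑ s ∈ S, g s := by
  rw [← sum_map_toList]
  exact ((mem_orderings.mp hB).map g).sum_eq

theorem ne_nil_of_mem_orderings (hS : S.Nonempty) (hB : B ∈ orderings S) : B ≠ [] := by
  rintro rfl
  simpa [eq_comm, hS.ne_empty] using (mem_orderings.mp hB).length_eq

theorem cons_mem_orderings {a : α} {L : List α} :
    a :: L ∈ orderings S ↔ a ∈ S ∧ L ∈ orderings (S.erase a) := by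
  have hperm : (S.toList.erase a).Perm (S.erase a).toList := by
    rw [← Multiset.coe_eq_coe, ← Multiset.coe_erase, Finset.coe_toList, Finset.coe_toList,
      erase_val]
  simp only [mem_orderings, List.cons_perm_iff_perm_erase, mem_toList]
  exact and_congr_right fun _ => ⟨fun h => h.trans hperm, fun h => h.trans hperm.symm⟩

theorem reverse_mem_orderings : B.reverse ∈ orderings S ↔ B ∈ orderings S := by
  rw [mem_orderings, mem_orderings]
  exact ⟨(List.reverse_perm B).symm.trans, (List.reverse_perm B).trans⟩

theorem sum_orderings_reverse {M : Type*} [AddCommMonoid M] (h : List α → M) (S : Finset α) :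
    ∑ B ∈ orderings S, h B.reverse = ∑ B ∈ orderings S, h B :=
  sum_nbij' List.reverse List.reverse (fun _ => reverse_mem_orderings.mpr)
    (fun _ => reverse_mem_orderings.mpr) (fun B _ => B.reverse_reverse)
    (fun B _ => B.reverse_reverse) (fun _ _ => rfl)

theorem sum_orderings_eq_sum_cons {M : Type*} [AddCommMonoid M] (h : List α → M)
    (hS : S.Nonempty) :
    ∑ B ∈ orderings S, h B = ∑ a ∈ S, ∑ L ∈ orderings (S.erase a), h (a :: L) := by
  rw [sum_sigma']
  symm
  refine sum_nbij (fun x => x.1 :: x.2) ?_ ?_ ?_ fun _ _ => rfl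
  · rintro ⟨a, L⟩ hx
    exact cons_mem_orderings.mpr (mem_sigma.mp hx)
  · rintro ⟨a, L⟩ _ ⟨b, M⟩ _ h
    obtain ⟨rfl, rfl⟩ := List.cons.inj h
    rfl
  · intro B hB
    obtain ⟨b, L, rfl⟩ := List.exists_cons_of_ne_nil (ne_nil_of_mem_orderings hS hB)
    exact ⟨⟨b, L⟩, mem_sigma.mpr (cons_mem_orderings.mp hB), rfl⟩

theorem sum_orderings_eq_sum_concat {M : Type*} [AddCommMonoid M] (h : List α → M)
    (hS : S.Nonempty) :
    ∑ B ∈ orderings S, h B = ∑ a ∈ S, ∑ L ∈ orderings (S.erase a), h (L ++ [a]) := by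
  rw [← sum_orderings_reverse, sum_orderings_eq_sum_cons _ hS]
  refine sum_congr rfl fun a _ => ?_
  rw [← sum_orderings_reverse]
  simp only [List.reverse_cons, List.reverse_reverse]

end Orderings

section SetProb

variable [DecidableEq α] (p : α → ℝ) (t : ℝ) {S : Finset α}

theorem setProb_eq_sum_orderings (S : Finset α) :
    setProb p t S = ∑ B ∈ orderings S, ordProb p t B :=
  (sum_orderings _ S).symm

theorem setProb_eq_sum_erase (hS : S.Nonempty) :
    setProb p t S = ∑ a ∈ S, p a / t * setProb p (t - p a) (S.erase a) := by
  simp only [setProb_eq_sum_orderings, sum_orderings_eq_sum_cons _ hS, mul_sum]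
  rfl

theorem mul_setProb_eq_sum_erase (hS : S.Nonempty) (ht : t ≠ 0) :
    t * setProb p t S = ∑ a ∈ S, p a * setProb p (t - p a) (S.erase a) := by
  rw [setProb_eq_sum_erase p t hS, mul_sum]
  exact sum_congr rfl fun a _ => by field_simp

noncomputable def lastProb (S : Finset α) (a : α) : ℝ :=
  setProb p t (S.erase a) * (p a / (t - ∑ b ∈ S.erase a, p b))

theorem sum_ordProb_concat (S : Finset α) (a : α) :
    ∑ L ∈ orderings (S.erase a), ordProb p t (L ++ [a]) = lastProb p t S a := by
  rw [lastProb, setProb_eq_sum_orderings, sum_mul]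
  refine sum_congr rfl fun L hL => ?_
  simp [ordProb_append, ordProb, sum_map_of_mem_orderings p hL]

theorem setProb_eq_sum_lastProb (hS : S.Nonempty) :
    setProb p t S = ∑ a ∈ S, lastProb p t S a := by
  rw [setProb_eq_sum_orderings, sum_orderings_eq_sum_concat _ hS]
  exact sum_congr rfl fun a _ => sum_ordProb_concat p t S a

theorem setProb_sub_erase_eq (hp : ∀ b ∈ S, 0 < p b) (ht : ∑ b ∈ S, p b ≤ t) {a : α}
    (ha : a ∈ S) :
    setProb p (t - p a) (S.erase a) = setProb p t S
      + (t - ∑ b ∈ S, p b) / (t - ∑ b ∈ S, p b + p a) * setProb p t (S.erase a) := by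
  induction S using Finset.strongInduction generalizing t with
  | H S ih =>
  have hpa : p a ≤ ∑ b ∈ S, p b := single_le_sum (fun b hb => (hp b hb).le) ha
  have ht0 : 0 < t := (hp a ha).trans_le (hpa.trans ht)
  rcases (S.erase a).eq_empty_or_nonempty with hT | hT
  · obtain rfl : S = {a} := (erase_eq_empty_iff S a).mp hT |>.resolve_left (ne_empty_of_mem ha)
    simp only [erase_singleton, setProb_empty, setProb_singleton, sum_singleton]
    field_simp [ht0.ne']
    ring
  set u := t - ∑ b ∈ S, p b
  -- `u`, the mass left after drawing all of `S`, is the same for `S.erase b` drawn from `t - p b`.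
  have hIH : ∀ b ∈ S.erase a, setProb p (t - p a - p b) ((S.erase a).erase b)
      = setProb p (t - p b) (S.erase b)
        + u / (u + p a) * setProb p (t - p b) ((S.erase a).erase b) := by
    intro b hb
    have hbS := mem_of_mem_erase hb
    have h := ih (S.erase b) (erase_ssubset hbS) (t - p b)
      (fun c hc => hp c (mem_of_mem_erase hc))
      (by rw [sum_erase_eq_sub hbS]; linarith)
      (mem_erase.mpr ⟨(ne_of_mem_erase hb).symm, ha⟩)
    have hu : t - p b - (∑ c ∈ S, p c - p b) = u := by ring
    rwa [sum_erase_eq_sub hbS, erase_right_comm, hu, sub_right_comm] at h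
  have hta : 0 < t - p a := by
    have := sum_pos (fun b hb => hp b (mem_of_mem_erase hb)) hT
    rw [sum_erase_eq_sub ha] at this
    linarith
  -- Expanding all three `setProb` terms by their first draw reduces the claim to `hIH`.
  have hX := mul_setProb_eq_sum_erase p (t - p a) hT hta.ne'
  have hY := mul_setProb_eq_sum_erase p t ⟨a, ha⟩ ht0.ne'
  have hZ := mul_setProb_eq_sum_erase p t hT ht0.ne'
  rw [← add_sum_erase _ _ ha] at hY
  rw [sum_congr rfl fun b hb => by rw [hIH b hb]] at hX
  simp only [mul_add, sum_add_distrib, mul_left_comm _ (u / (u + p a)), ← mul_sum] at hX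
  apply mul_left_cancel₀ ht0.ne'
  linear_combination hX - hY - u / (u + p a) * hZ

theorem mul_setProb_sub_erase_eq_add_lastProb (hp : ∀ b ∈ S, 0 < p b)
    (ht : ∑ b ∈ S, p b ≤ t) {a : α} (ha : a ∈ S) :
    p a * setProb p (t - p a) (S.erase a)
      = p a * setProb p t S + (t - ∑ b ∈ S, p b) * lastProb p t S a := by
  rw [setProb_sub_erase_eq p t hp ht ha, lastProb, sum_erase_eq_sub ha]
  ring

end SetProb

theorem rao_blackwell_sum_and_sample [DecidableEq α] [Inhabited α] (D S : Finset α)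
    (hS : S ⊆ D) (hSne : S.Nonempty) (p f : α → ℝ)
    (hp : ∀ x ∈ D, 0 < p x) (hsum : ∑ x ∈ D, p x = 1) :
    ((S.toList.permutations.map (fun B =>
        ordProb p 1 B * ((B.dropLast.map (fun b => p b * f b)).sum
          + (1 - (B.dropLast.map p).sum) * f B.reverse.headI))).sum) / setProb p 1 S
      = ∑ s ∈ S, p s * (setProb p (1 - p s) (S.erase s) / setProb p 1 S) * f s := by
  have hpS : ∀ s ∈ S, 0 < p s := fun s hs => hp s (hS hs)
  have hPS : ∑ s ∈ S, p s ≤ 1 :=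
    hsum ▸ sum_le_sum_of_subset_of_nonneg hS fun x hx _ => (hp x hx).le
  have hnum : (S.toList.permutations.map (fun B =>
        ordProb p 1 B * ((B.dropLast.map (fun b => p b * f b)).sum
          + (1 - (B.dropLast.map p).sum) * f B.reverse.headI))).sum
      = ∑ a ∈ S, (lastProb p 1 S a * ∑ s ∈ S, p s * f s
          + (1 - ∑ s ∈ S, p s) * (lastProb p 1 S a * f a)) := by
    rw [← sum_orderings, sum_orderings_eq_sum_concat _ hSne]
    refine sum_congr rfl fun a ha => ?_
    rw [← sum_ordProb_concat, sum_mul, sum_mul, mul_sum, ← sum_add_distrib]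
    refine sum_congr rfl fun L hL => ?_
    simp only [List.dropLast_concat, List.reverse_concat, List.headI_cons,
      sum_map_of_mem_orderings _ hL, sum_erase_eq_sub ha]
    ring
  have hrhs : ∑ s ∈ S, p s * (setProb p (1 - p s) (S.erase s) / setProb p 1 S) * f s
      = (∑ s ∈ S, (setProb p 1 S * (p s * f s)
          + (1 - ∑ s ∈ S, p s) * (lastProb p 1 S s * f s))) / setProb p 1 S := by
    rw [sum_div]
    refine sum_congr rfl fun s hs => ?_
    linear_combination (f s / setProb p 1 S) * mul_setProb_sub_erase_eq_add_lastProb p 1 hpS hPS hs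
  rw [hnum, hrhs, setProb_eq_sum_lastProb p 1 hSne]
  simp only [sum_add_distrib, ← sum_mul, ← mul_sum]
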